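/- For A ∈ M_d(ℝ) regarded as an operator on ℓ₁^d, the 1-nuclear norm is given by ν₁(A) = Σ_{i=1}^d max_j |a_{ij}|. -/

import Mathlib

/-!
Testing a decomposition `A = Σ_k g_k ⊗ x_k` on the unit vector `e_j` gives
`a_{ij} = Σ_k g_k(e_j) x_k(i)`, hence `max_j |a_{ij}| ≤ Σ_k ‖g_k‖ |x_k(i)|`, and summing over `i`
bounds `Σ_i max_j |a_{ij}|` by `Σ_k ‖g_k‖ ‖x_k‖₁`. The row decomposition `A = Σ_i r_i ⊗ e_i`
attains the bound, because a functional on `ℓ₁` has norm at most the largest of its values on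
the unit vectors.
-/

noncomputable section

/-- The operator on the `d`-dimensional Banach space `F` (identified with `ℝ^d` via the
linear equivalence `φ`) induced by a `d × d` matrix `A`. -/
def matOp (d : ℕ) (F : Type) [NormedAddCommGroup F] [NormedSpace ℝ F]
    [FiniteDimensional ℝ F] (φ : F ≃ₗ[ℝ] (Fin d → ℝ))
    (A : Matrix (Fin d) (Fin d) ℝ) : F →L[ℝ] F :=
  LinearMap.toContinuousLinearMap ((φ.symm.toLinearMap ∘ₗ A.mulVecLin) ∘ₗ φ.toLinearMap)

/-- The 1-nuclear norm `ν₁(A)` of a matrix `A` acting on the Banach space `F`: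
the infimum of `Σ ‖f_i‖_{F*}·‖x_i‖_F` over all rank-one decompositions
`A = Σ f_i ⊗ x_i`. -/
def nuclearNorm (d : ℕ) (F : Type) [NormedAddCommGroup F] [NormedSpace ℝ F]
    [FiniteDimensional ℝ F] (φ : F ≃ₗ[ℝ] (Fin d → ℝ))
    (A : Matrix (Fin d) (Fin d) ℝ) : ℝ :=
  sInf {c : ℝ | ∃ (m : ℕ) (g : Fin m → StrongDual ℝ F) (x : Fin m → F),
    (∀ v : F, matOp d F φ A v = ∑ i, g i v • x i) ∧ c = ∑ i, ‖g i‖ * ‖x i‖}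

end

open Finset

namespace PiLp

variable {ι : Type*} [Fintype ι]

theorem sum_iSup_abs_le_sum_norm_mul_norm {E κ : Type*} [SeminormedAddCommGroup E]
    [NormedSpace ℝ E] [Fintype κ] (g : κ → StrongDual ℝ E) (x : κ → PiLp 1 fun _ : ι => ℝ)
    (e : ι → E) (he : ∀ j, ‖e j‖ ≤ 1) :
    ∑ i, ⨆ j, |∑ k, g k (e j) * x k i| ≤ ∑ k, ‖g k‖ * ‖x k‖ := by
  have hentry : ∀ i j, |∑ k, g k (e j) * x k i| ≤ ∑ k, ‖g k‖ * |x k i| := fun i j =>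
    (abs_sum_le_sum_abs _ _).trans <| sum_le_sum fun k _ => by
      rw [abs_mul]
      gcongr
      exact ((g k).le_opNorm (e j)).trans (mul_le_of_le_one_right (norm_nonneg _) (he j))
  calc ∑ i, ⨆ j, |∑ k, g k (e j) * x k i|
      ≤ ∑ i, ∑ k, ‖g k‖ * |x k i| := sum_le_sum fun i _ =>
        haveI : Nonempty ι := ⟨i⟩; ciSup_le (hentry i)
    _ = ∑ k, ‖g k‖ * ‖x k‖ := by
        rw [sum_comm]
        simp_rw [norm_eq_of_L1, mul_sum, Real.norm_eq_abs]

variable {𝕜 : Type*} [DecidableEq ι]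

theorem sum_smul_single_one {p : ENNReal} [Ring 𝕜] (v : PiLp p fun _ : ι => 𝕜) :
    ∑ i, v i • single p i (1 : 𝕜) = v := by
  simpa using (basisFun p 𝕜 ι).sum_repr v

theorem opNorm_le_iSup_norm_apply_single_one [NontriviallyNormedField 𝕜]
    {F : Type*} [SeminormedAddCommGroup F] [NormedSpace 𝕜 F]
    (f : (PiLp 1 fun _ : ι => 𝕜) →L[𝕜] F) :
    ‖f‖ ≤ ⨆ j, ‖f (single 1 j 1)‖ := by
  have hbdd : BddAbove (Set.range fun j => ‖f (single 1 j 1)‖) := (Set.finite_range _).bddAbove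
  refine f.opNorm_le_bound (Real.iSup_nonneg fun _ => norm_nonneg _) fun v => ?_
  conv_lhs => rw [← sum_smul_single_one v]
  rw [norm_eq_of_L1, mul_sum, map_sum]
  refine (norm_sum_le _ _).trans (sum_le_sum fun j _ => ?_)
  rw [map_smul, norm_smul, mul_comm]
  exact mul_le_mul_of_nonneg_right (le_ciSup hbdd j) (norm_nonneg _)

end PiLp

theorem matOp_single_one_apply {d : ℕ} (A : Matrix (Fin d) (Fin d) ℝ) (i j : Fin d) :
    matOp d (PiLp 1 fun _ : Fin d => ℝ) (WithLp.linearEquiv 1 ℝ (Fin d → ℝ)) A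
      (PiLp.single 1 j 1) i = A i j := by
  simp [matOp]

theorem sum_iSup_abs_le_of_matOp_eq_sum {d : ℕ} {κ : Type*} [Fintype κ]
    (A : Matrix (Fin d) (Fin d) ℝ) (g : κ → StrongDual ℝ (PiLp 1 fun _ : Fin d => ℝ))
    (x : κ → PiLp 1 fun _ : Fin d => ℝ)
    (hrep : ∀ v, matOp d _ (WithLp.linearEquiv 1 ℝ (Fin d → ℝ)) A v = ∑ k, g k v • x k) :
    ∑ i, ⨆ j, |A i j| ≤ ∑ k, ‖g k‖ * ‖x k‖ := by
  have hA : ∀ i j, A i j = ∑ k, g k (PiLp.single 1 j 1) * x k i := fun i j => by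
    rw [← matOp_single_one_apply A i j, hrep]
    simp
  simp_rw [hA]
  exact PiLp.sum_iSup_abs_le_sum_norm_mul_norm g x _ fun j => by simp

theorem nuclearNorm_l1 (d : ℕ) (A : Matrix (Fin d) (Fin d) ℝ) :
    nuclearNorm d (PiLp 1 (fun _ : Fin d => ℝ))
        (WithLp.linearEquiv 1 ℝ (Fin d → ℝ)) A =
      ∑ i : Fin d, ⨆ j : Fin d, |A i j| := by
  set T := matOp d (PiLp 1 fun _ : Fin d => ℝ) (WithLp.linearEquiv 1 ℝ (Fin d → ℝ)) A
  have hrows : ∀ v, T v = ∑ i, (PiLp.proj 1 (fun _ => ℝ) i ∘L T) v •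
      (PiLp.single 1 i 1 : PiLp 1 fun _ : Fin d => ℝ) := fun v =>
    (PiLp.sum_smul_single_one (T v)).symm
  have hrow_norm : ∀ i, ‖PiLp.proj 1 (fun _ => ℝ) i ∘L T‖ *
      ‖(PiLp.single 1 i 1 : PiLp 1 fun _ : Fin d => ℝ)‖ ≤ ⨆ j, |A i j| := fun i => by
    simpa [T, matOp_single_one_apply] using
      PiLp.opNorm_le_iSup_norm_apply_single_one (PiLp.proj 1 (fun _ => ℝ) i ∘L T)
  unfold nuclearNorm
  refine le_antisymm
    (csInf_le_of_le ⟨_, ?lower⟩ ⟨d, _, _, hrows, rfl⟩ (sum_le_sum fun i _ => hrow_norm i))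
    (le_csInf ⟨_, d, _, _, hrows, rfl⟩ ?lower)
  rintro _ ⟨m, g, x, hrep, rfl⟩
  exact sum_iSup_abs_le_of_matOp_eq_sum A g x hrep
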